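/- arXiv:1808.07162 — 4 statements merged into one kernel-verified Lean document; each statement's English description precedes it below -/
import Mathlib

section
/- Uniqueness of positive periodic solutions for a scalar logistic-type ODE with positive forcing: let a, b, f : ℝ → ℝ be continuous and T-periodic with b(t) > 0 and f(t) > 0 for all t. Then the equation u'(t) = u(t)·(a(t) - b(t)·u(t)) + f(t) has at most one positive T-periodic solution. Specifically, if u₁, u₂ are positive T-periodic solutions with u₁(t) > u₂(t) for all t ∈ [0,T], then the function û = u₁ - u₂ satisfies û(T) < û(0), contradicting periodicity. -/
/-!
The quotient `r = u₁ / u₂` of two positive solutions satisfies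
`r' = (1 - r) (b u₁ u₂ + f) / u₂`, and the second factor is positive, so the only critical
value of `r` is `1`. Being periodic and differentiable, `r` attains its maximum and its minimum
at critical points, hence `r ≡ 1`.
-/

open Function Set

namespace Function.Periodic

variable {α : Type*} [TopologicalSpace α] [LinearOrder α] [OrderClosedTopology α]
  {g : ℝ → α} {T : ℝ}

theorem exists_forall_ge_of_continuous (hp : Periodic g T) (hT : T ≠ 0) (hg : Continuous g) :
    ∃ t₀, ∀ t, g t ≤ g t₀ := by
  obtain ⟨_, ⟨t₀, rfl⟩, hmax⟩ :=
    (hp.compact_of_continuous hT hg).exists_isGreatest (range_nonempty g)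
  exact ⟨t₀, fun t => hmax (mem_range_self t)⟩

theorem exists_forall_le_of_continuous (hp : Periodic g T) (hT : T ≠ 0) (hg : Continuous g) :
    ∃ t₀, ∀ t, g t₀ ≤ g t := by
  obtain ⟨_, ⟨t₀, rfl⟩, hmin⟩ :=
    (hp.compact_of_continuous hT hg).exists_isLeast (range_nonempty g)
  exact ⟨t₀, fun t => hmin (mem_range_self t)⟩

end Function.Periodic

theorem Function.Periodic.eq_of_critical_values_eq {g g' : ℝ → ℝ} {T c : ℝ}
    (hp : Periodic g T) (hT : T ≠ 0) (hg : ∀ t, HasDerivAt g (g' t) t)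
    (hcrit : ∀ t, g' t = 0 → g t = c) (t : ℝ) : g t = c := by
  have hcont : Continuous g := continuous_iff_continuousAt.2 fun t => (hg t).continuousAt
  obtain ⟨tmax, hmax⟩ := hp.exists_forall_ge_of_continuous hT hcont
  obtain ⟨tmin, hmin⟩ := hp.exists_forall_le_of_continuous hT hcont
  have hle : g tmax = c :=
    hcrit tmax (IsLocalMax.hasDerivAt_eq_zero (.of_forall hmax) (hg tmax))
  have hge : g tmin = c :=
    hcrit tmin (IsLocalMin.hasDerivAt_eq_zero (.of_forall hmin) (hg tmin))
  exact le_antisymm (hle ▸ hmax t) (hge ▸ hmin t)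

theorem hasDerivAt_div_of_forced_logistic {a b f u₁ u₂ : ℝ → ℝ} {t : ℝ}
    (hu₁ : HasDerivAt u₁ (u₁ t * (a t - b t * u₁ t) + f t) t)
    (hu₂ : HasDerivAt u₂ (u₂ t * (a t - b t * u₂ t) + f t) t) (hu₂t : u₂ t ≠ 0) :
    HasDerivAt (u₁ / u₂) ((u₂ t - u₁ t) * (b t * u₁ t * u₂ t + f t) / u₂ t ^ 2) t :=
  (hu₁.div hu₂ hu₂t).congr_deriv (by ring)

theorem stmt4_general (T : ℝ) (hT : 0 < T) (a b f : ℝ → ℝ)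
    (hbpos : ∀ t, 0 < b t) (hfpos : ∀ t, 0 < f t)
    (u₁ u₂ : ℝ → ℝ)
    (hu₁pos : ∀ t, 0 < u₁ t) (hu₂pos : ∀ t, 0 < u₂ t)
    (hu₁P : Function.Periodic u₁ T) (hu₂P : Function.Periodic u₂ T)
    (hu₁ : ∀ t, HasDerivAt u₁ (u₁ t * (a t - b t * u₁ t) + f t) t)
    (hu₂ : ∀ t, HasDerivAt u₂ (u₂ t * (a t - b t * u₂ t) + f t) t) :
    u₁ = u₂ := by
  have hcrit : ∀ t, (u₂ t - u₁ t) * (b t * u₁ t * u₂ t + f t) / u₂ t ^ 2 = 0 →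
      (u₁ / u₂) t = 1 := by
    intro t h
    have hpos : 0 < b t * u₁ t * u₂ t + f t := by
      have := hbpos t; have := hu₁pos t; have := hu₂pos t; have := hfpos t; positivity
    rw [div_eq_zero_iff, mul_eq_zero, sub_eq_zero] at h
    rcases h with (h | h) | h
    · rw [Pi.div_apply, h, div_self (hu₁pos t).ne']
    · exact absurd h hpos.ne'
    · exact absurd h (pow_ne_zero 2 (hu₂pos t).ne')
  funext t
  have hratio := (hu₁P.div hu₂P).eq_of_critical_values_eq hT.ne'
    (fun t => hasDerivAt_div_of_forced_logistic (hu₁ t) (hu₂ t) (hu₂pos t).ne') hcrit t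
  exact (div_eq_one_iff_eq (hu₂pos t).ne').1 hratio

/-- Uniqueness of positive periodic solutions for the forced logistic ODE
`u' = u (a - b u) + f` with continuous `T`-periodic coefficients, `b > 0`, `f > 0`:
there is at most one positive `T`-periodic solution. -/
theorem stmt4 (T : ℝ) (hT : 0 < T) (a b f : ℝ → ℝ)
    (ha : Continuous a) (hb : Continuous b) (hf : Continuous f)
    (haP : Function.Periodic a T) (hbP : Function.Periodic b T)
    (hfP : Function.Periodic f T)
    (hbpos : ∀ t, 0 < b t) (hfpos : ∀ t, 0 < f t)
    (u₁ u₂ : ℝ → ℝ)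
    (hu₁pos : ∀ t, 0 < u₁ t) (hu₂pos : ∀ t, 0 < u₂ t)
    (hu₁P : Function.Periodic u₁ T) (hu₂P : Function.Periodic u₂ T)
    (hu₁ : ∀ t, HasDerivAt u₁ (u₁ t * (a t - b t * u₁ t) + f t) t)
    (hu₂ : ∀ t, HasDerivAt u₂ (u₂ t * (a t - b t * u₂ t) + f t) t) :
    u₁ = u₂ :=
  stmt4_general T hT a b f hbpos hfpos u₁ u₂ hu₁pos hu₂pos hu₁P hu₂P hu₁ hu₂
end

section
/- Order preservation for solutions of a two-component cooperative-type iteration: suppose (ū, u̲) solve the coupled system u̲' = L[u̲] + u̲(a - b u̲ - c G∗ū), ū' = L[ū] + ū(a - b ū - c G∗u̲), with u̲(·,0) ≤ ū(·,0), where L[w](x) = ∫J(y-x)w(y)dy - w(x), a, b, c continuous bounded with b > 0 and c ≥ 0, and both ū, u̲ are bounded and nonnegative. Then for the weighted difference ω = e^{ht}(ū - u̲) with h large enough that p(x,t) := h + a - 1 - b(ū+u̲) - c G∗u̲ ≥ 0, the function ω satisfies ω_t ≥ ∫J(y-x)ω(y,t)dy + p ω + c ū G∗ω with ω(·,0) ≥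 0 and the coefficient of G∗ω nonnegative; consequently ω ≥ 0 and hence u̲(x,t) ≤ ū(x,t) for all t ≥ 0. -/
/-!
For `ω = e^{hs} (ū - u̲)` the two equations combine into the linear nonlocal equation
`ω_s = J∗ω + p ω + c u̲ G∗ω`, whose coefficients `p` and `c u̲` are nonnegative and bounded.
If `ω(·, s) ≥ -m` with `m ≥ 0`, then `ω_s ≥ -K m` for `K = 1 + sup p + sup c u̲`, because the
kernels have mass one. Starting from a lower bound `-M` on `[0, t]` and integrating repeatedly
from `ω(·, 0) ≥ 0` improves the bound to `-M (K s)ⁿ / n!` for every `n`, hence `ω ≥ 0`.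
-/

open MeasureTheory Set Real Nat

theorem hasDerivAt_mul_pow_div_factorial (C K r : ℝ) (n : ℕ) :
    HasDerivAt (fun s => C * (K * s) ^ (n + 1) / (n + 1)!) (K * (C * (K * r) ^ n / n !)) r := by
  refine ((((hasDerivAt_id' r).const_mul K).fun_pow (n + 1)).const_mul C).div_const
    ((n + 1)! : ℝ) |>.congr_deriv ?_
  rw [Nat.factorial_succ, Nat.add_sub_cancel]
  push_cast
  field_simp

theorem nonpos_of_hasDerivAt_le_const_mul_bound {ι : Type*} {θ θ' : ι → ℝ → ℝ} {K t : ℝ}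
    (hK : 0 ≤ K) (ht : 0 ≤ t) (hbdd : ∃ M, ∀ i, ∀ s ∈ Icc 0 t, θ i s ≤ M)
    (hinit : ∀ i, θ i 0 ≤ 0) (hderiv : ∀ i, ∀ s ∈ Icc 0 t, HasDerivAt (θ i) (θ' i s) s)
    (hθ' : ∀ s ∈ Icc 0 t, ∀ m, 0 ≤ m → (∀ j, θ j s ≤ m) → ∀ i, θ' i s ≤ K * m) (i : ι) :
    θ i t ≤ 0 := by
  obtain ⟨M, hM⟩ := hbdd
  set M' := max M 0
  have hM' : 0 ≤ M' := le_max_right M 0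
  have hiter : ∀ n : ℕ, ∀ s ∈ Icc 0 t, ∀ i, θ i s ≤ M' * (K * s) ^ n / n ! := by
    intro n
    induction n with
    | zero =>
      intro s hs i
      simpa only [pow_zero, mul_one, Nat.factorial_zero, Nat.cast_one, div_one] using
        (hM i s hs).trans (le_max_left M 0)
    | succ n ih =>
      intro s hs i
      have hsub : Icc 0 s ⊆ Icc 0 t := Icc_subset_Icc_right hs.2
      refine image_le_of_deriv_right_le_deriv_boundary (f' := θ' i)
        (B' := fun r => K * (M' * (K * r) ^ n / n !))
        (fun r hr => (hderiv i r (hsub hr)).continuousAt.continuousWithinAt)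
        (fun r hr => (hderiv i r (hsub (Ico_subset_Icc_self hr))).hasDerivWithinAt)
        (by simpa using hinit i)
        (fun r _ => (hasDerivAt_mul_pow_div_factorial M' K r n).continuousAt.continuousWithinAt)
        (fun r _ => (hasDerivAt_mul_pow_div_factorial M' K r n).hasDerivWithinAt)
        (fun r hr => ?_) ⟨hs.1, le_rfl⟩
      have hr' : r ∈ Icc 0 t := hsub (Ico_subset_Icc_self hr)
      exact hθ' r hr' _ (by have := hr.1; positivity) (fun j => ih r hr' j) i
  have hlim : Filter.Tendsto (fun n : ℕ => M' * (K * t) ^ n / n !) Filter.atTop (nhds 0) := by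
    simpa only [mul_div_assoc, mul_zero] using
      (FloorSemiring.tendsto_pow_div_factorial_atTop (K * t)).const_mul M'
  exact ge_of_tendsto' hlim fun n => hiter n t ⟨ht, le_rfl⟩ i

section Kernel

variable {E : Type*} [MeasurableSpace E] [AddGroup E] [MeasurableAdd E] {μ : Measure E}
  [μ.IsAddRightInvariant]

theorem integral_kernel_mul_le {J f : E → ℝ} {m : ℝ} (hJ0 : ∀ z, 0 ≤ J z)
    (hJint : Integrable J μ) (hJmass : ∫ z, J z ∂μ ≤ 1) (hm : 0 ≤ m) (x : E)
    (hf : Integrable (fun y => J (y - x) * f y) μ) (hfm : ∀ y, f y ≤ m) :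
    ∫ y, J (y - x) * f y ∂μ ≤ m :=
  calc ∫ y, J (y - x) * f y ∂μ
      ≤ ∫ y, J (y - x) * m ∂μ :=
        integral_mono hf ((hJint.comp_sub_right x).mul_const m) fun y =>
          mul_le_mul_of_nonneg_left (hfm y) (hJ0 _)
    _ = (∫ z, J z ∂μ) * m := by rw [integral_mul_const, integral_sub_right_eq_self]
    _ ≤ m := mul_le_of_le_one_left hm hJmass

theorem nonneg_of_nonlocal_supersolution {J G : E → ℝ} (hJ0 : ∀ z, 0 ≤ J z)
    (hJint : Integrable J μ) (hJmass : ∫ z, J z ∂μ ≤ 1) (hG0 : ∀ z, 0 ≤ G z)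
    (hGint : Integrable G μ) (hGmass : ∫ z, G z ∂μ ≤ 1)
    {ω ω' h₁ h₂ : E → ℝ → ℝ} {C₁ C₂ t : ℝ} (ht : 0 ≤ t)
    (hh₁ : ∀ x, ∀ s ∈ Icc 0 t, h₁ x s ∈ Icc 0 C₁) (hh₂ : ∀ x, ∀ s ∈ Icc 0 t, h₂ x s ∈ Icc 0 C₂)
    (hbdd : ∃ M, ∀ x, ∀ s ∈ Icc 0 t, -M ≤ ω x s) (hinit : ∀ x, 0 ≤ ω x 0)
    (hωJ : ∀ x, ∀ s ∈ Icc 0 t, Integrable (fun y => J (y - x) * ω y s) μ)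
    (hωG : ∀ x, ∀ s ∈ Icc 0 t, Integrable (fun y => G (y - x) * ω y s) μ)
    (hderiv : ∀ x, ∀ s ∈ Icc 0 t, HasDerivAt (ω x) (ω' x s) s)
    (hsuper : ∀ x, ∀ s ∈ Icc 0 t, (∫ y, J (y - x) * ω y s ∂μ) + h₁ x s * ω x s +
      h₂ x s * (∫ y, G (y - x) * ω y s ∂μ) ≤ ω' x s)
    (x : E) : 0 ≤ ω x t := by
  have ht' : (0 : ℝ) ∈ Icc 0 t := ⟨le_rfl, ht⟩
  have hC₁ : 0 ≤ C₁ := (hh₁ 0 0 ht').1.trans (hh₁ 0 0 ht').2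
  have hC₂ : 0 ≤ C₂ := (hh₂ 0 0 ht').1.trans (hh₂ 0 0 ht').2
  rw [← neg_nonpos]
  refine nonpos_of_hasDerivAt_le_const_mul_bound (θ := fun x s => -ω x s)
    (θ' := fun x s => -ω' x s) (K := 1 + C₁ + C₂) (by positivity) ht ?_
    (fun x => neg_nonpos.mpr (hinit x)) (fun x s hs => (hderiv x s hs).neg) ?_ x
  · obtain ⟨M, hM⟩ := hbdd
    exact ⟨M, fun x s hs => neg_le.mp (hM x s hs)⟩
  intro s hs m hm hωm x
  have hJ : -∫ y, J (y - x) * ω y s ∂μ ≤ m := by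
    simpa only [mul_neg, integral_neg] using integral_kernel_mul_le hJ0 hJint hJmass hm x
      (by simpa only [mul_neg] using (hωJ x s hs).fun_neg) hωm
  have hG : -∫ y, G (y - x) * ω y s ∂μ ≤ m := by
    simpa only [mul_neg, integral_neg] using integral_kernel_mul_le hG0 hGint hGmass hm x
      (by simpa only [mul_neg] using (hωG x s hs).fun_neg) hωm
  obtain ⟨h₁0, h₁C⟩ := hh₁ x s hs
  obtain ⟨h₂0, h₂C⟩ := hh₂ x s hs
  have := hsuper x s hs
  linarith [mul_le_mul_of_nonneg_left (hωm x) h₁0, mul_le_mul_of_nonneg_left hG h₂0,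
    mul_le_mul_of_nonneg_right h₁C hm, mul_le_mul_of_nonneg_right h₂C hm]

end Kernel

section WeightedDifference

variable {α : Type*} [MeasurableSpace α] {μ : Measure α} {k f g : α → ℝ}

theorem MeasureTheory.Integrable.mul_const_mul_sub (hf : Integrable (fun y => k y * f y) μ)
    (hg : Integrable (fun y => k y * g y) μ) (e : ℝ) :
    Integrable (fun y => k y * (e * (f y - g y))) μ :=
  ((hf.sub hg).const_mul e).congr <| Filter.Eventually.of_forall fun y => by
    simp only [Pi.sub_apply]
    ring

theorem integral_mul_const_mul_sub (hf : Integrable (fun y => k y * f y) μ)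
    (hg : Integrable (fun y => k y * g y) μ) (e : ℝ) :
    ∫ y, k y * (e * (f y - g y)) ∂μ = e * ((∫ y, k y * f y ∂μ) - ∫ y, k y * g y ∂μ) := by
  rw [← integral_sub hf hg, ← integral_const_mul]
  congr 1 with y
  ring

end WeightedDifference

theorem stmt11_general {N : ℕ} (J G : (Fin N → ℝ) → ℝ) (hJ0 : ∀ z, 0 ≤ J z) (hG0 : ∀ z, 0 ≤ G z)
    (hJint : Integrable J) (hGint : Integrable G)
    (hJmass : ∫ z, J z = 1) (hGmass : ∫ z, G z = 1)
    (a b c : (Fin N → ℝ) → ℝ → ℝ)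
    (hab : ∃ C, ∀ x t, |a x t| ≤ C)
    (hcb : ∃ C, ∀ x t, |c x t| ≤ C)
    (hbpos : ∀ x t, 0 < b x t) (hcnonneg : ∀ x t, 0 ≤ c x t)
    (ubar ulow : (Fin N → ℝ) → ℝ → ℝ)
    (hlbd : ∃ C, ∀ x t, |ulow x t| ≤ C)
    (hunn : ∀ x t, 0 ≤ t → 0 ≤ ubar x t) (hlnn : ∀ x t, 0 ≤ t → 0 ≤ ulow x t)
    (hubarJ : ∀ x t, 0 ≤ t → Integrable (fun y => J (y - x) * ubar y t))
    (hlowJ : ∀ x t, 0 ≤ t → Integrable (fun y => J (y - x) * ulow y t))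
    (hubarG : ∀ x t, 0 ≤ t → Integrable (fun y => G (y - x) * ubar y t))
    (hlowG : ∀ x t, 0 ≤ t → Integrable (fun y => G (y - x) * ulow y t))
    (hlowEq : ∀ x t, 0 ≤ t → HasDerivAt (fun s => ulow x s)
      (((∫ y, J (y - x) * ulow y t) - ulow x t) +
        ulow x t * (a x t - b x t * ulow x t - c x t * ∫ y, G (y - x) * ubar y t)) t)
    (hbarEq : ∀ x t, 0 ≤ t → HasDerivAt (fun s => ubar x s)
      (((∫ y, J (y - x) * ubar y t) - ubar x t) +
        ubar x t * (a x t - b x t * ubar x t - c x t * ∫ y, G (y - x) * ulow y t)) t)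
    (hinit : ∀ x, ulow x 0 ≤ ubar x 0)
    (h : ℝ)
    (hp : ∀ x t, 0 ≤ t →
      0 ≤ h + a x t - 1 - b x t * (ubar x t + ulow x t) -
        c x t * ∫ y, G (y - x) * ulow y t) :
    ∀ x t, 0 ≤ t →
      0 ≤ Real.exp (h * t) * (ubar x t - ulow x t) ∧ ulow x t ≤ ubar x t := by
  intro x t ht
  obtain ⟨Ca, hCa⟩ := hab
  obtain ⟨Cc, hCc⟩ := hcb
  obtain ⟨Cl, hCl⟩ := hlbd
  have hp_le : ∀ x, ∀ s ∈ Icc 0 t, h + a x s - 1 - b x s * (ubar x s + ulow x s) -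
      c x s * ∫ y, G (y - x) * ulow y s ≤ h + Ca := by
    intro x s hs
    have := (abs_le.mp (hCa x s)).2
    have := mul_nonneg (hbpos x s).le (add_nonneg (hunn x s hs.1) (hlnn x s hs.1))
    have : 0 ≤ c x s * ∫ y, G (y - x) * ulow y s :=
      mul_nonneg (hcnonneg x s) (integral_nonneg fun y => mul_nonneg (hG0 _) (hlnn y s hs.1))
    linarith
  have hcu_mem : ∀ x, ∀ s ∈ Icc 0 t, c x s * ulow x s ∈ Icc 0 (Cc * Cl) := fun x s hs =>
    ⟨mul_nonneg (hcnonneg x s) (hlnn x s hs.1),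
      mul_le_mul ((le_abs_self _).trans (hCc x s)) ((le_abs_self _).trans (hCl x s))
        (hlnn x s hs.1) ((abs_nonneg _).trans (hCc x s))⟩
  have hω_bdd : ∀ x, ∀ s ∈ Icc 0 t,
      -(exp (|h| * t) * Cl) ≤ exp (h * s) * (ubar x s - ulow x s) := by
    intro x s hs
    have hexp : exp (h * s) ≤ exp (|h| * t) :=
      exp_le_exp.mpr (mul_le_mul (le_abs_self h) hs.2 hs.1 (abs_nonneg h))
    have := mul_le_mul hexp ((le_abs_self _).trans (hCl x s)) (hlnn x s hs.1) (exp_pos _).le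
    have := mul_nonneg (exp_pos (h * s)).le (hunn x s hs.1)
    linarith
  have hω : 0 ≤ exp (h * t) * (ubar x t - ulow x t) := by
    refine nonneg_of_nonlocal_supersolution hJ0 hJint hJmass.le hG0 hGint hGmass.le ht
      (fun x s hs => ⟨hp x s hs.1, hp_le x s hs⟩) hcu_mem ⟨_, hω_bdd⟩
      (fun x => by simpa using hinit x)
      (fun x s hs => (hubarJ x s hs.1).mul_const_mul_sub (hlowJ x s hs.1) _)
      (fun x s hs => (hubarG x s hs.1).mul_const_mul_sub (hlowG x s hs.1) _)
      (fun x s hs => ((hasDerivAt_id' s).const_mul h).exp.mul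
        ((hbarEq x s hs.1).sub (hlowEq x s hs.1))) (fun x s hs => le_of_eq ?_) x
    rw [integral_mul_const_mul_sub (hubarJ x s hs.1) (hlowJ x s hs.1),
      integral_mul_const_mul_sub (hubarG x s hs.1) (hlowG x s hs.1)]
    ring
  exact ⟨hω, sub_nonneg.mp (nonneg_of_mul_nonneg_right hω (exp_pos _))⟩

/-- Order preservation for the two-component cooperative-type system: if `(ū, u̲)` solve
`u̲_t = L[u̲] + u̲(a - b u̲ - c G∗ū)`, `ū_t = L[ū] + ū(a - b ū - c G∗u̲)` with
`u̲(·,0) ≤ ū(·,0)`, both bounded nonnegative, `b > 0`, `c ≥ 0`, and `h` is large enough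
that `p := h + a - 1 - b(ū+u̲) - c G∗u̲ ≥ 0`, then `ω = e^{ht}(ū - u̲) ≥ 0` and hence
`u̲ ≤ ū` for all `t ≥ 0`. -/
theorem stmt11 {N : ℕ} (J G : (Fin N → ℝ) → ℝ) (hJ0 : ∀ z, 0 ≤ J z) (hG0 : ∀ z, 0 ≤ G z)
    (hJint : Integrable J) (hGint : Integrable G)
    (hJmass : ∫ z, J z = 1) (hGmass : ∫ z, G z = 1)
    (a b c : (Fin N → ℝ) → ℝ → ℝ)
    (ha : Continuous fun p : (Fin N → ℝ) × ℝ => a p.1 p.2)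
    (hab : ∃ C, ∀ x t, |a x t| ≤ C)
    (hbc : Continuous fun p : (Fin N → ℝ) × ℝ => b p.1 p.2)
    (hbb : ∃ C, ∀ x t, |b x t| ≤ C)
    (hcc : Continuous fun p : (Fin N → ℝ) × ℝ => c p.1 p.2)
    (hcb : ∃ C, ∀ x t, |c x t| ≤ C)
    (hbpos : ∀ x t, 0 < b x t) (hcnonneg : ∀ x t, 0 ≤ c x t)
    (ubar ulow : (Fin N → ℝ) → ℝ → ℝ)
    (hubd : ∃ C, ∀ x t, |ubar x t| ≤ C) (hlbd : ∃ C, ∀ x t, |ulow x t| ≤ C)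
    (hunn : ∀ x t, 0 ≤ t → 0 ≤ ubar x t) (hlnn : ∀ x t, 0 ≤ t → 0 ≤ ulow x t)
    (hubarJ : ∀ x t, 0 ≤ t → Integrable (fun y => J (y - x) * ubar y t))
    (hlowJ : ∀ x t, 0 ≤ t → Integrable (fun y => J (y - x) * ulow y t))
    (hubarG : ∀ x t, 0 ≤ t → Integrable (fun y => G (y - x) * ubar y t))
    (hlowG : ∀ x t, 0 ≤ t → Integrable (fun y => G (y - x) * ulow y t))
    (hlowEq : ∀ x t, 0 ≤ t → HasDerivAt (fun s => ulow x s)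
      (((∫ y, J (y - x) * ulow y t) - ulow x t) +
        ulow x t * (a x t - b x t * ulow x t - c x t * ∫ y, G (y - x) * ubar y t)) t)
    (hbarEq : ∀ x t, 0 ≤ t → HasDerivAt (fun s => ubar x s)
      (((∫ y, J (y - x) * ubar y t) - ubar x t) +
        ubar x t * (a x t - b x t * ubar x t - c x t * ∫ y, G (y - x) * ulow y t)) t)
    (hinit : ∀ x, ulow x 0 ≤ ubar x 0)
    (h : ℝ)
    (hp : ∀ x t, 0 ≤ t →
      0 ≤ h + a x t - 1 - b x t * (ubar x t + ulow x t) -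
        c x t * ∫ y, G (y - x) * ulow y t) :
    ∀ x t, 0 ≤ t →
      0 ≤ Real.exp (h * t) * (ubar x t - ulow x t) ∧ ulow x t ≤ ubar x t :=
  stmt11_general J G hJ0 hG0 hJint hGint hJmass hGmass a b c hab hcb hbpos hcnonneg ubar ulow hlbd
    hunn hlnn hubarJ hlowJ hubarG hlowG hlowEq hbarEq hinit h hp
end

section
/- Pointwise ODE system comparison for spatially homogeneous bounds: let a, b, c : ℝ → ℝ be continuous T-periodic with b(t) ≥ b_L > c_M ≥ c(t) ≥ 0. Suppose (ū, v̲) : [0,∞) → ℝ² is a solution of ū' = ū(a - b ū - c v̲), v̲' = v̲(a - b v̲ - c ū) with ū(0) ≥ v̲(0) > 0. Then ū(t) ≥ v̲(t) > 0 for all t ≥ 0, and (d/dt) log(ū/v̲) = -(b(t) - c(t))(ū - v̲) ≤ 0, so t ↦ ū(t)/v̲(t) is nonincreasing. -/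
open Set

/-! Each component solves a linear equation `f' = f g` with `g` continuous along the
solution, so `f = f 0 · exp ∫ g` keeps its sign; the same applies to `ū - v̲`, which
solves `(ū - v̲)' = (ū - v̲)(a - b (ū + v̲))`. Subtracting the logarithmic derivatives gives
`(log (ū / v̲))' = -(b - c)(ū - v̲)`, which is `≤ 0` because `b ≥ b_L > c_M ≥ c`. -/

section LinearODE

variable {f g : ℝ → ℝ}

theorem eq_mul_exp_integral_of_hasDerivAt_mul (hg : Continuous g)
    (hf : ∀ t, HasDerivAt f (f t * g t) t) (t : ℝ) :
    f t = f 0 * Real.exp (∫ x in (0 : ℝ)..t, g x) := by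
  set G : ℝ → ℝ := fun s => ∫ x in (0 : ℝ)..s, g x
  have hG : ∀ s, HasDerivAt G (g s) s := fun s =>
    intervalIntegral.integral_hasDerivAt_right (hg.intervalIntegrable 0 s)
      hg.stronglyMeasurable.stronglyMeasurableAtFilter hg.continuousAt
  have hconst : ∀ s, HasDerivAt (fun s => f s * Real.exp (-G s)) 0 s := fun s =>
    ((hf s).mul (hG s).neg.exp).congr_deriv (by ring)
  have key := is_const_of_deriv_eq_zero (fun s => (hconst s).differentiableAt)
    (fun s => (hconst s).deriv) t 0
  have hG0 : G 0 = 0 := intervalIntegral.integral_same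
  rw [hG0, neg_zero, Real.exp_zero, mul_one, Real.exp_neg, ← div_eq_mul_inv,
    div_eq_iff (Real.exp_pos _).ne'] at key
  exact key

theorem pos_of_hasDerivAt_mul (hg : Continuous g) (hf : ∀ t, HasDerivAt f (f t * g t) t)
    (h0 : 0 < f 0) (t : ℝ) : 0 < f t := by
  rw [eq_mul_exp_integral_of_hasDerivAt_mul hg hf t]
  exact mul_pos h0 (Real.exp_pos _)

theorem nonneg_of_hasDerivAt_mul (hg : Continuous g) (hf : ∀ t, HasDerivAt f (f t * g t) t)
    (h0 : 0 ≤ f 0) (t : ℝ) : 0 ≤ f t := by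
  rw [eq_mul_exp_integral_of_hasDerivAt_mul hg hf t]
  exact mul_nonneg h0 (Real.exp_pos _).le

end LinearODE

section Ratio

variable {u v : ℝ → ℝ} {p q : ℝ} {t : ℝ}

theorem HasDerivAt.div_of_mul (hu : HasDerivAt u (u t * p) t) (hv : HasDerivAt v (v t * q) t)
    (hvt : v t ≠ 0) : HasDerivAt (fun s => u s / v s) (u t / v t * (p - q)) t :=
  (hu.div hv hvt).congr_deriv (by field_simp)

theorem HasDerivAt.log_div_of_mul (hu : HasDerivAt u (u t * p) t)
    (hv : HasDerivAt v (v t * q) t) (hut : u t ≠ 0) (hvt : v t ≠ 0) :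
    HasDerivAt (fun s => Real.log (u s / v s)) (p - q) t :=
  ((hu.div_of_mul hv hvt).log (div_ne_zero hut hvt)).congr_deriv
    (mul_div_cancel_left₀ _ (div_ne_zero hut hvt))

end Ratio

theorem stmt17_general (a b c : ℝ → ℝ)
    (ha : Continuous a) (hb : Continuous b) (hc : Continuous c)
    (bL cM : ℝ) (hbL : ∀ t, bL ≤ b t) (hcM : ∀ t, c t ≤ cM)
    (hord : cM < bL)
    (ubar vlow : ℝ → ℝ)
    (hud : ∀ t, HasDerivAt ubar (ubar t * (a t - b t * ubar t - c t * vlow t)) t)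
    (hvd : ∀ t, HasDerivAt vlow (vlow t * (a t - b t * vlow t - c t * ubar t)) t)
    (hinit : vlow 0 ≤ ubar 0) (hinitpos : 0 < vlow 0) :
    (∀ t, 0 ≤ t → 0 < vlow t ∧ vlow t ≤ ubar t) ∧
    (∀ t, 0 ≤ t →
      HasDerivAt (fun s => Real.log (ubar s / vlow s))
        (-(b t - c t) * (ubar t - vlow t)) t ∧
      -(b t - c t) * (ubar t - vlow t) ≤ 0) ∧
    AntitoneOn (fun t => ubar t / vlow t) (Ici 0) := by
  have hu : Continuous ubar := continuous_iff_continuousAt.2 fun t => (hud t).continuousAt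
  have hv : Continuous vlow := continuous_iff_continuousAt.2 fun t => (hvd t).continuousAt
  have hvpos : ∀ t, 0 < vlow t :=
    pos_of_hasDerivAt_mul (by fun_prop) hvd hinitpos
  have hupos : ∀ t, 0 < ubar t :=
    pos_of_hasDerivAt_mul (by fun_prop) hud (hinitpos.trans_le hinit)
  have hle : ∀ t, vlow t ≤ ubar t := fun t => sub_nonneg.1 <|
    nonneg_of_hasDerivAt_mul (g := fun s => a s - b s * (ubar s + vlow s)) (by fun_prop)
      (fun s => ((hud s).sub (hvd s)).congr_deriv (by simp only [Pi.sub_apply]; ring))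
      (sub_nonneg.2 hinit) t
  have hrate_nonpos : ∀ t, -(b t - c t) * (ubar t - vlow t) ≤ 0 := fun t =>
    mul_nonpos_of_nonpos_of_nonneg (by linarith [hbL t, hcM t]) (sub_nonneg.2 (hle t))
  have hrate : ∀ t, (a t - b t * ubar t - c t * vlow t) - (a t - b t * vlow t - c t * ubar t)
      = -(b t - c t) * (ubar t - vlow t) := fun t => by ring
  refine ⟨fun t _ => ⟨hvpos t, hle t⟩,
    fun t _ => ⟨hrate t ▸ (hud t).log_div_of_mul (hvd t) (hupos t).ne' (hvpos t).ne',
      hrate_nonpos t⟩, ?_⟩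
  refine (antitone_of_hasDerivAt_nonpos
    (fun t => (hud t).div_of_mul (hvd t) (hvpos t).ne') fun t => ?_).antitoneOn _
  rw [hrate t]
  exact mul_nonpos_of_nonneg_of_nonpos (div_pos (hupos t) (hvpos t)).le (hrate_nonpos t)

/-- Pointwise ODE system comparison for spatially homogeneous bounds: with `a, b, c`
continuous `T`-periodic, `b ≥ b_L > c_M ≥ c ≥ 0`, and `(ū, v̲)` a solution of
`ū' = ū(a - b ū - c v̲)`, `v̲' = v̲(a - b v̲ - c ū)` with `ū(0) ≥ v̲(0) > 0`, one has
`ū(t) ≥ v̲(t) > 0` for all `t ≥ 0`, the log-ratio derivative equals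
`-(b - c)(ū - v̲) ≤ 0`, and `t ↦ ū/v̲` is nonincreasing on `[0,∞)`. -/
theorem stmt17 (T : ℝ) (hT : 0 < T) (a b c : ℝ → ℝ)
    (ha : Continuous a) (hb : Continuous b) (hc : Continuous c)
    (haP : Function.Periodic a T) (hbP : Function.Periodic b T)
    (hcP : Function.Periodic c T)
    (bL cM : ℝ) (hbL : ∀ t, bL ≤ b t) (hcM : ∀ t, c t ≤ cM)
    (hc0 : ∀ t, 0 ≤ c t) (hord : cM < bL)
    (ubar vlow : ℝ → ℝ)
    (hud : ∀ t, HasDerivAt ubar (ubar t * (a t - b t * ubar t - c t * vlow t)) t)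
    (hvd : ∀ t, HasDerivAt vlow (vlow t * (a t - b t * vlow t - c t * ubar t)) t)
    (hinit : vlow 0 ≤ ubar 0) (hinitpos : 0 < vlow 0) :
    (∀ t, 0 ≤ t → 0 < vlow t ∧ vlow t ≤ ubar t) ∧
    (∀ t, 0 ≤ t →
      HasDerivAt (fun s => Real.log (ubar s / vlow s))
        (-(b t - c t) * (ubar t - vlow t)) t ∧
      -(b t - c t) * (ubar t - vlow t) ≤ 0) ∧
    AntitoneOn (fun t => ubar t / vlow t) (Ici 0) :=
  stmt17_general a b c ha hb hc bL cM hbL hcM hord ubar vlow hud hvd hinit hinitpos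
end

section
/- Nonnegativity preservation via an integral inequality with nonnegative kernel terms: let Ω ⊆ ℝ^N, J, G : ℝ^N → [0,∞) integrable with ∫J = ∫G = 1, h₁, h₂ : Ω × [0,∞) → ℝ continuous with 0 < h₁ ≤ h₁M < ∞ and 0 ≤ h₂ ≤ h₂M < ∞. If Φ : Ω × [0,∞) → ℝ is continuous, bounded below, satisfies Φ(·,0) ≥ 0 and the integral inequality Φ(x,t) - Φ(x,0) ≥ ∫₀ᵗ [ ∫_Ω J(y-x)Φ(y,s)dy + h₁(x,s)Φ(x,s) + h₂(x,s)∫_Ω G(y-x)Φ(y,s)dy ] ds for all x ∈ Ω, t ≥ 0, then Φ(x,t) ≥ 0 for all (x,t) ∈ Ω × [0,∞). -/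
/-!
Put `K = 1 + h₁M + h₂M`. Since the kernels have unit mass and the coefficients are bounded,
`Φ ≥ -m` on `Ω × [0, T]` (with `m ≥ 0`) forces the integrand to be `≥ -K m` there. So if `Φ ≥ 0`
up to time `a` and `Φ ≥ -m` up to `a + δ` with `K δ ≤ 1/2`, the integral inequality improves the
bound to `Φ ≥ -m/2` up to `a + δ`. Halving the lower bound repeatedly gives `Φ ≥ 0` up to `a + δ`,
and steps of length `δ` exhaust `[0, ∞)`.
-/

open MeasureTheory Set Filter Topology

lemma neg_le_setIntegral_mul {α : Type*} [MeasurableSpace α] {μ : Measure α} {s : Set α}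
    (hs : MeasurableSet s) {w f : α → ℝ} (hw₀ : ∀ y, 0 ≤ w y) (hw : Integrable w μ)
    (hmass : ∫ y, w y ∂μ ≤ 1) {m : ℝ} (hm : 0 ≤ m) (hf : ∀ y ∈ s, -m ≤ f y) :
    -m ≤ ∫ y in s, w y * f y ∂μ := by
  by_cases hwf : IntegrableOn (fun y => w y * f y) s μ
  · have hmass_s : ∫ y in s, w y ∂μ ≤ 1 :=
      (setIntegral_le_integral hw (ae_of_all _ hw₀)).trans hmass
    calc -m ≤ (∫ y in s, w y ∂μ) * -m := by
          rw [mul_neg]; exact neg_le_neg (mul_le_of_le_one_left hm hmass_s)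
      _ = ∫ y in s, w y * -m ∂μ := (integral_mul_const _ _).symm
      _ ≤ ∫ y in s, w y * f y ∂μ :=
        setIntegral_mono_on (hw.integrableOn.mul_const _) hwf hs
          fun y hy => mul_le_mul_of_nonneg_left (hf y hy) (hw₀ y)
  · rw [integral_undef hwf]; linarith

lemma neg_le_setIntegral_comp_sub_mul {E : Type*} [NormedAddCommGroup E] [MeasurableSpace E]
    [BorelSpace E] {μ : Measure E} [μ.IsAddRightInvariant] {s : Set E} (hs : MeasurableSet s)
    {W f : E → ℝ} (hW₀ : ∀ z, 0 ≤ W z) (hW : Integrable W μ) (hmass : ∫ z, W z ∂μ = 1)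
    {m : ℝ} (hm : 0 ≤ m) (hf : ∀ y ∈ s, -m ≤ f y) (x : E) :
    -m ≤ ∫ y in s, W (y - x) * f y ∂μ :=
  neg_le_setIntegral_mul hs (fun y => hW₀ _) (hW.comp_sub_right x)
    (by rw [integral_sub_right_eq_self W x, hmass]) hm hf

lemma neg_mul_le_mul_of_neg_le {c M m φ : ℝ} (hc : 0 ≤ c) (hcM : c ≤ M) (hm : 0 ≤ m)
    (hφ : -m ≤ φ) : -(M * m) ≤ c * φ :=
  calc -(M * m) ≤ c * -m := by rw [mul_neg]; exact neg_le_neg (mul_le_mul_of_nonneg_right hcM hm)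
    _ ≤ c * φ := mul_le_mul_of_nonneg_left hφ hc

lemma neg_mul_sub_le_intervalIntegral {g : ℝ → ℝ} {a t L : ℝ} (ha : 0 ≤ a) (hat : a ≤ t)
    (hL : 0 ≤ L) (hg₀ : ∀ u ∈ Icc 0 a, 0 ≤ g u) (hg : ∀ u ∈ Icc a t, -L ≤ g u) :
    -(L * (t - a)) ≤ ∫ u in 0..t, g u := by
  by_cases hgi : IntervalIntegrable g volume 0 t
  · have ha_mem : a ∈ uIcc 0 t := mem_uIcc_of_le ha hat
    have hgi₁ := hgi.mono_set (uIcc_subset_uIcc left_mem_uIcc ha_mem)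
    have hgi₂ := hgi.mono_set (uIcc_subset_uIcc ha_mem right_mem_uIcc)
    rw [← intervalIntegral.integral_add_adjacent_intervals hgi₁ hgi₂]
    have h₁ : 0 ≤ ∫ u in 0..a, g u := intervalIntegral.integral_nonneg ha hg₀
    have h₂ : ∫ u in a..t, -L ≤ ∫ u in a..t, g u :=
      intervalIntegral.integral_mono_on hat intervalIntegrable_const hgi₂ hg
    rw [intervalIntegral.integral_const, smul_eq_mul] at h₂
    linarith
  · rw [intervalIntegral.integral_undef hgi]
    nlinarith

lemma nonneg_of_neg_le_half {ι : Type*} {S : Set ι} {v : ι → ℝ}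
    (hbdd : ∃ m, ∀ i ∈ S, -m ≤ v i)
    (hhalf : ∀ m, 0 ≤ m → (∀ i ∈ S, -m ≤ v i) → ∀ i ∈ S, -(m / 2) ≤ v i) :
    ∀ i ∈ S, 0 ≤ v i := by
  obtain ⟨m, hm⟩ := hbdd
  set m₀ := max m 0
  have hpow : ∀ k : ℕ, ∀ i ∈ S, -(m₀ * (1 / 2) ^ k) ≤ v i := by
    intro k
    induction k with
    | zero => simpa using fun i hi => (neg_le_neg (le_max_left m 0)).trans (hm i hi)
    | succ k ih =>
      rw [pow_succ, ← mul_assoc, mul_one_div]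
      exact hhalf _ (by positivity) ih
  have hlim : Tendsto (fun k : ℕ => -(m₀ * (1 / 2) ^ k)) atTop (𝓝 0) := by
    have hgeom :=
      tendsto_pow_atTop_nhds_zero_of_lt_one (r := (1 / 2 : ℝ)) (by norm_num) (by norm_num)
    simpa using (hgeom.const_mul m₀).neg
  exact fun i hi => le_of_tendsto' hlim fun k => hpow k i hi

lemma forall_of_forall_Icc_step {R : ℝ → Prop} {δ : ℝ} (hδ : 0 < δ) (h0 : R 0)
    (hstep : ∀ a, 0 ≤ a → (∀ s ∈ Icc 0 a, R s) → ∀ s ∈ Icc 0 (a + δ), R s) :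
    ∀ t, 0 ≤ t → R t := by
  have hnat : ∀ n : ℕ, ∀ s ∈ Icc 0 (n * δ), R s := by
    intro n
    induction n with
    | zero =>
      intro s hs
      rwa [le_antisymm (by simpa using hs.2) hs.1]
    | succ n ih =>
      rw [Nat.cast_succ, add_one_mul]
      exact hstep _ (by positivity) ih
  intro t ht
  obtain ⟨n, hn⟩ := exists_nat_ge (t / δ)
  exact hnat n t ⟨ht, (div_le_iff₀ hδ).1 hn⟩

section Comparison

variable {X : Type*} {Ω : Set X} {Φ F : X → ℝ → ℝ} {K : ℝ}

lemma neg_half_le_of_nonneg_on_Icc (hK : 0 ≤ K) {a δ m : ℝ} (ha : 0 ≤ a)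
    (hKδ : K * δ ≤ 1 / 2) (hm : 0 ≤ m) (h0 : ∀ x ∈ Ω, 0 ≤ Φ x 0)
    (hineq : ∀ x ∈ Ω, ∀ t, 0 ≤ t → Φ x t - Φ x 0 ≥ ∫ s in 0..t, F x s)
    (hF : ∀ m T, 0 ≤ m → (∀ s ∈ Icc 0 T, ∀ y ∈ Ω, -m ≤ Φ y s) →
      ∀ s ∈ Icc 0 T, ∀ x ∈ Ω, -(K * m) ≤ F x s)
    (hnonneg : ∀ s ∈ Icc 0 a, ∀ x ∈ Ω, 0 ≤ Φ x s)
    (hbdd : ∀ s ∈ Icc 0 (a + δ), ∀ x ∈ Ω, -m ≤ Φ x s) :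
    ∀ t ∈ Icc 0 (a + δ), ∀ x ∈ Ω, -(m / 2) ≤ Φ x t := by
  rintro t ⟨ht, htδ⟩ x hx
  rcases le_total t a with hta | hat
  · linarith [hnonneg t ⟨ht, hta⟩ x hx]
  have hF₀ : ∀ s ∈ Icc 0 a, 0 ≤ F x s := fun s hs => by
    simpa using hF 0 a le_rfl (by simpa using hnonneg) s hs x hx
  have hF₁ : ∀ s ∈ Icc a t, -(K * m) ≤ F x s := fun s hs =>
    hF m (a + δ) hm hbdd s ⟨ha.trans hs.1, hs.2.trans htδ⟩ x hx
  have hint := neg_mul_sub_le_intervalIntegral ha hat (mul_nonneg hK hm) hF₀ hF₁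
  have hgrowth : K * m * (t - a) ≤ m / 2 :=
    calc K * m * (t - a) ≤ K * m * δ :=
          mul_le_mul_of_nonneg_left (by linarith) (mul_nonneg hK hm)
      _ = K * δ * m := by ring
      _ ≤ 1 / 2 * m := by gcongr
      _ = m / 2 := by ring
  linarith [hineq x hx t ht, h0 x hx]

theorem nonneg_of_sub_ge_intervalIntegral (hK : 0 ≤ K)
    (hbdd : ∃ C, ∀ x ∈ Ω, ∀ t, 0 ≤ t → C ≤ Φ x t) (h0 : ∀ x ∈ Ω, 0 ≤ Φ x 0)
    (hineq : ∀ x ∈ Ω, ∀ t, 0 ≤ t → Φ x t - Φ x 0 ≥ ∫ s in 0..t, F x s)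
    (hF : ∀ m T, 0 ≤ m → (∀ s ∈ Icc 0 T, ∀ y ∈ Ω, -m ≤ Φ y s) →
      ∀ s ∈ Icc 0 T, ∀ x ∈ Ω, -(K * m) ≤ F x s) :
    ∀ x ∈ Ω, ∀ t, 0 ≤ t → 0 ≤ Φ x t := by
  obtain ⟨C, hC⟩ := hbdd
  set δ := 1 / (2 * K + 1)
  have hδ : 0 < δ := by positivity
  have hKδ : K * δ ≤ 1 / 2 := by
    rw [mul_one_div, div_le_iff₀ (by positivity)]; linarith
  suffices ∀ t, 0 ≤ t → ∀ x ∈ Ω, 0 ≤ Φ x t from fun x hx t ht => this t ht x hx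
  refine forall_of_forall_Icc_step hδ h0 fun a ha hnonneg => ?_
  have hprod := nonneg_of_neg_le_half (S := Icc 0 (a + δ) ×ˢ Ω) (v := fun p => Φ p.2 p.1)
    ⟨-C, fun p hp => by simpa using hC p.2 hp.2 p.1 hp.1.1⟩ fun m hm hlow => by
      simpa only [forall_prod_set] using
        neg_half_le_of_nonneg_on_Icc hK ha hKδ hm h0 hineq hF hnonneg
          (by simpa only [forall_prod_set] using hlow)
  simpa only [forall_prod_set] using hprod

end Comparison

theorem stmt19_general {N : ℕ} (Ω : Set (Fin N → ℝ)) (hΩ : MeasurableSet Ω)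
    (J G : (Fin N → ℝ) → ℝ) (hJ0 : ∀ z, 0 ≤ J z) (hG0 : ∀ z, 0 ≤ G z)
    (hJint : Integrable J) (hGint : Integrable G)
    (hJmass : ∫ z, J z = 1) (hGmass : ∫ z, G z = 1)
    (h₁ h₂ : (Fin N → ℝ) → ℝ → ℝ) (h₁M h₂M : ℝ)
    (hh₁pos : ∀ x ∈ Ω, ∀ t, 0 ≤ t → 0 < h₁ x t ∧ h₁ x t ≤ h₁M)
    (hh₂nn : ∀ x ∈ Ω, ∀ t, 0 ≤ t → 0 ≤ h₂ x t ∧ h₂ x t ≤ h₂M)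
    (Φ : (Fin N → ℝ) → ℝ → ℝ)
    (hΦbdd : ∃ C : ℝ, ∀ x ∈ Ω, ∀ t, 0 ≤ t → C ≤ Φ x t)
    (hΦ0 : ∀ x ∈ Ω, 0 ≤ Φ x 0)
    (hineq : ∀ x ∈ Ω, ∀ t, 0 ≤ t →
      Φ x t - Φ x 0 ≥
        ∫ s in (0 : ℝ)..t,
          ((∫ y in Ω, J (y - x) * Φ y s) + h₁ x s * Φ x s +
            h₂ x s * ∫ y in Ω, G (y - x) * Φ y s)) :
    ∀ x ∈ Ω, ∀ t, 0 ≤ t → 0 ≤ Φ x t := by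
  intro x₀ hx₀
  have hK : 0 ≤ 1 + h₁M + h₂M := by
    obtain ⟨h₁pos, h₁le⟩ := hh₁pos x₀ hx₀ 0 le_rfl
    obtain ⟨h₂nn, h₂le⟩ := hh₂nn x₀ hx₀ 0 le_rfl
    linarith
  refine nonneg_of_sub_ge_intervalIntegral hK hΦbdd hΦ0 hineq
    (fun m T hm hbdd s hs x hx => ?_) x₀ hx₀
  have hΦs : ∀ y ∈ Ω, -m ≤ Φ y s := hbdd s hs
  have hJ := neg_le_setIntegral_comp_sub_mul hΩ hJ0 hJint hJmass hm hΦs x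
  have hG := neg_le_setIntegral_comp_sub_mul hΩ hG0 hGint hGmass hm hΦs x
  obtain ⟨h₁pos, h₁le⟩ := hh₁pos x hx s hs.1
  obtain ⟨h₂nn, h₂le⟩ := hh₂nn x hx s hs.1
  have h₁Φ := neg_mul_le_mul_of_neg_le h₁pos.le h₁le hm (hΦs x hx)
  have h₂G := neg_mul_le_mul_of_neg_le h₂nn h₂le hm hG
  linarith

/-- Nonnegativity preservation via an integral inequality with nonnegative kernel terms:
if `J, G ≥ 0` are integrable with unit mass, `0 < h₁ ≤ h₁M`, `0 ≤ h₂ ≤ h₂M`, and a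
continuous, bounded-below `Φ` with `Φ(·,0) ≥ 0` satisfies
`Φ(x,t) - Φ(x,0) ≥ ∫₀ᵗ [∫_Ω J(y-x)Φ(y,s)dy + h₁ Φ + h₂ ∫_Ω G(y-x)Φ(y,s)dy] ds`,
then `Φ ≥ 0` on `Ω × [0,∞)`. -/
theorem stmt19 {N : ℕ} (Ω : Set (Fin N → ℝ)) (hΩ : MeasurableSet Ω)
    (J G : (Fin N → ℝ) → ℝ) (hJ0 : ∀ z, 0 ≤ J z) (hG0 : ∀ z, 0 ≤ G z)
    (hJint : Integrable J) (hGint : Integrable G)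
    (hJmass : ∫ z, J z = 1) (hGmass : ∫ z, G z = 1)
    (h₁ h₂ : (Fin N → ℝ) → ℝ → ℝ) (h₁M h₂M : ℝ)
    (hh₁c : Continuous fun p : (Fin N → ℝ) × ℝ => h₁ p.1 p.2)
    (hh₂c : Continuous fun p : (Fin N → ℝ) × ℝ => h₂ p.1 p.2)
    (hh₁pos : ∀ x ∈ Ω, ∀ t, 0 ≤ t → 0 < h₁ x t ∧ h₁ x t ≤ h₁M)
    (hh₂nn : ∀ x ∈ Ω, ∀ t, 0 ≤ t → 0 ≤ h₂ x t ∧ h₂ x t ≤ h₂M)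
    (Φ : (Fin N → ℝ) → ℝ → ℝ)
    (hΦc : Continuous fun p : (Fin N → ℝ) × ℝ => Φ p.1 p.2)
    (hΦbdd : ∃ C : ℝ, ∀ x ∈ Ω, ∀ t, 0 ≤ t → C ≤ Φ x t)
    (hΦ0 : ∀ x ∈ Ω, 0 ≤ Φ x 0)
    (hineq : ∀ x ∈ Ω, ∀ t, 0 ≤ t →
      Φ x t - Φ x 0 ≥
        ∫ s in (0 : ℝ)..t,
          ((∫ y in Ω, J (y - x) * Φ y s) + h₁ x s * Φ x s +
            h₂ x s * ∫ y in Ω, G (y - x) * Φ y s)) :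
    ∀ x ∈ Ω, ∀ t, 0 ≤ t → 0 ≤ Φ x t :=
  stmt19_general Ω hΩ J G hJ0 hG0 hJint hGint hJmass hGmass h₁ h₂ h₁M h₂M hh₁pos hh₂nn Φ hΦbdd hΦ0
    hineq
end
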